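/- arXiv:0712.2682 — 6 statements merged into one kernel-verified Lean document; each statement's English description precedes it below -/
import Mathlib

section
/- For any real n×m matrix Y (n, m ≥ 1), the L2 biclustering cost satisfies V(Y) ≤ V_R(Y) + V_C(Y), where V(Y) = Σ_{i,j}(Y(i,j) − μ)², V_R(Y) = Σ_j Σ_i (Y(i,j) − μ_j^col)², and V_C(Y) = Σ_i Σ_j (Y(i,j) − μ_i^row)². -/
/-!
For each column `j`, Steiner's decomposition splits `∑ i, (Y i j - μ) ^ 2` into the spread
`∑ i, (Y i j - μcol j) ^ 2` within the column plus `n * (μcol j - μ) ^ 2`. Since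
`μcol j - μ` is the average over `i` of `Y i j - μrow i`, the second term is at most
`∑ i, (Y i j - μrow i) ^ 2` (Steiner again, about `0`). Summing over `j` gives the bound.
-/

open Finset

section Steiner

variable {ι K : Type*} [Field K]

theorem sum_sub_mean_eq_zero [CharZero K] (s : Finset ι) (f : ι → K) :
    ∑ i ∈ s, (f i - (∑ j ∈ s, f j) / #s) = 0 := by
  rcases s.eq_empty_or_nonempty with rfl | hs
  · simp
  · have hcard : (#s : K) ≠ 0 := by simpa using hs.ne_empty
    rw [sum_sub_distrib, sum_const, nsmul_eq_mul, mul_div_cancel₀ _ hcard, sub_self]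

theorem sum_sub_sq_eq_sum_sub_mean_sq_add [CharZero K] (s : Finset ι) (f : ι → K)
    (a : K) :
    ∑ i ∈ s, (f i - a) ^ 2 =
      ∑ i ∈ s, (f i - (∑ j ∈ s, f j) / #s) ^ 2 + #s * ((∑ j ∈ s, f j) / #s - a) ^ 2 := by
  set c := (∑ j ∈ s, f j) / #s
  calc ∑ i ∈ s, (f i - a) ^ 2
      = ∑ i ∈ s, ((f i - c) ^ 2 + 2 * (c - a) * (f i - c) + (c - a) ^ 2) :=
        sum_congr rfl fun i _ => by ring
    _ = _ := by
        rw [sum_add_distrib, sum_add_distrib, ← mul_sum, sum_sub_mean_eq_zero, sum_const,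
          nsmul_eq_mul, mul_zero, add_zero]

theorem card_mul_mean_sq_le_sum_sq [LinearOrder K] [IsStrictOrderedRing K] (s : Finset ι)
    (f : ι → K) : #s * ((∑ i ∈ s, f i) / #s) ^ 2 ≤ ∑ i ∈ s, f i ^ 2 := by
  have h := sum_sub_sq_eq_sum_sub_mean_sq_add s f 0
  simp only [sub_zero] at h
  rw [h]
  exact le_add_of_nonneg_left (sum_nonneg fun i _ => sq_nonneg _)

end Steiner

namespace Biclustering

variable {ι κ K : Type*} [Fintype ι] [Fintype κ] [Field K]

def mean (Y : ι → κ → K) : K :=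
  (∑ i, ∑ j, Y i j) / (Fintype.card ι * Fintype.card κ)

def colMean (Y : ι → κ → K) (j : κ) : K :=
  (∑ i, Y i j) / Fintype.card ι

def rowMean (Y : ι → κ → K) (i : ι) : K :=
  (∑ j, Y i j) / Fintype.card κ

theorem colMean_sub_mean (Y : ι → κ → K) (j : κ) :
    colMean Y j - mean Y = (∑ i, (Y i j - rowMean Y i)) / Fintype.card ι := by
  simp only [colMean, mean, rowMean]
  rw [sum_sub_distrib, sub_div, ← sum_div, div_div, mul_comm]

theorem card_mul_colMean_sub_mean_sq_le [LinearOrder K] [IsStrictOrderedRing K]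
    (Y : ι → κ → K) (j : κ) :
    Fintype.card ι * (colMean Y j - mean Y) ^ 2 ≤ ∑ i, (Y i j - rowMean Y i) ^ 2 := by
  rw [colMean_sub_mean]
  exact card_mul_mean_sq_le_sum_sq univ _

theorem sum_sq_sub_mean_le_col_add_row [LinearOrder K] [IsStrictOrderedRing K]
    (Y : ι → κ → K) :
    ∑ i, ∑ j, (Y i j - mean Y) ^ 2 ≤
      ∑ j, ∑ i, (Y i j - colMean Y j) ^ 2 + ∑ i, ∑ j, (Y i j - rowMean Y i) ^ 2 := by
  calc ∑ i, ∑ j, (Y i j - mean Y) ^ 2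
      = ∑ j, (∑ i, (Y i j - colMean Y j) ^ 2 +
          Fintype.card ι * (colMean Y j - mean Y) ^ 2) := by
        rw [sum_comm]
        exact sum_congr rfl fun j _ => sum_sub_sq_eq_sum_sub_mean_sq_add univ _ _
    _ ≤ ∑ j, (∑ i, (Y i j - colMean Y j) ^ 2 + ∑ i, (Y i j - rowMean Y i) ^ 2) := by
        gcongr with j
        exact card_mul_colMean_sub_mean_sq_le Y j
    _ = _ := by rw [sum_add_distrib, sum_comm (f := fun j i => (Y i j - rowMean Y i) ^ 2)]

end Biclustering

theorem l2_cost_le_row_add_col_general (n m : ℕ)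
    (Y : Fin n → Fin m → ℝ) :
    (let μ : ℝ := (∑ i, ∑ j, Y i j) / (n * m)
     let μcol : Fin m → ℝ := fun j => (∑ i, Y i j) / n
     let μrow : Fin n → ℝ := fun i => (∑ j, Y i j) / m
     ∑ i, ∑ j, (Y i j - μ) ^ 2 ≤
       (∑ j, ∑ i, (Y i j - μcol j) ^ 2) + (∑ i, ∑ j, (Y i j - μrow i) ^ 2)) := by
  simpa only [Biclustering.mean, Biclustering.colMean, Biclustering.rowMean, Fintype.card_fin]
    using Biclustering.sum_sq_sub_mean_le_col_add_row Y

/-- L2 biclustering cost bound: V(Y) ≤ V_R(Y) + V_C(Y). -/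
theorem l2_cost_le_row_add_col (n m : ℕ) (hn : 1 ≤ n) (hm : 1 ≤ m)
    (Y : Fin n → Fin m → ℝ) :
    (let μ : ℝ := (∑ i, ∑ j, Y i j) / (n * m)
     let μcol : Fin m → ℝ := fun j => (∑ i, Y i j) / n
     let μrow : Fin n → ℝ := fun i => (∑ j, Y i j) / m
     ∑ i, ∑ j, (Y i j - μ) ^ 2 ≤
       (∑ j, ∑ i, (Y i j - μcol j) ^ 2) + (∑ i, ∑ j, (Y i j - μrow i) ^ 2)) :=
  l2_cost_le_row_add_col_general n m Y
end

section
/- Consider the optimization problem: maximize f(x,y,a,b,c,d) = (a+b+c+d)/(x+y−2a+2d) subject to x,y ∈ [0,1], a+b+c+d ≤ 1/2, and one of the three regimes: (i) a = xy, b = x(1−y), c = (1−x)y, 0 ≤ d ≤ (1−x)(1−y); (ii) a = xy, 0 ≤ b ≤ x(1−y), 0 ≤ c ≤ (1−x)y, d = 0; (iii) 0 ≤ a ≤ xy, b = c = d = 0; with the denominator assumed positive. Then the supremum of f equals (1+√2)/2. -/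
/-!
Write `u = x + y` and let `q` be the amount subtracted twice in the denominator, so that the
denominator is `u - 2q`. In every regime the numerator `N` satisfies `N ≤ u - q` and `N ≤ 1/2`,
while `q ≤ xy ≤ u²/4`. When `u - q ≤ 1/2` these force `u ≤ 2 - √2`, and the first bound gives
ratio at most `(1 + √2)/2`; otherwise `u - 2q ≥ √2 - 1`, and the second bound does, because
`(1 + √2)(√2 - 1) = 1`. Equality holds at `x = y = √2/2`, `a = 1/2` in regime (iii).
-/

open Real

lemma sqrt_two_sub_one_le_sub_two_mul {u q : ℝ} (hq : 4 * q ≤ u ^ 2) (hq' : q ≤ 1 / 2)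
    (huq : 1 / 2 < u - q) : √2 - 1 ≤ u - 2 * q := by
  have hs : √2 ^ 2 = 2 := sq_sqrt (by norm_num)
  rcases le_or_gt u (2 - √2) with hu | hu
  · linarith
  rcases le_or_gt u √2 with hu' | hu'
  · -- `2 - √2` and `√2` are the roots of `u² - 2u + 2(√2 - 1)`
    nlinarith [mul_nonneg (sub_nonneg.2 hu') (sub_nonneg.2 hu.le)]
  · linarith

lemma le_one_add_sqrt_two_div_two_mul {u q N : ℝ} (hu : 0 ≤ u) (hq : 4 * q ≤ u ^ 2) (hq' : q ≤ 1 / 2)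
    (hN : N ≤ u - q) (hN' : N ≤ 1 / 2) : N ≤ (1 + √2) / 2 * (u - 2 * q) := by
  have hs : √2 ^ 2 = 2 := sq_sqrt (by norm_num)
  have hs0 : 0 ≤ √2 := sqrt_nonneg 2
  rcases le_or_gt (u - q) (1 / 2) with huq | huq
  · have hu2 : u ≤ 2 - √2 := by
      by_contra! h
      -- `u ∈ (2 - √2, 2 + √2)` contradicts `u² - 4u + 2 ≥ 0`
      nlinarith [mul_pos (sub_pos.2 h) (show 0 < 2 + √2 - u by linarith)]
    have hsq : 2 * √2 * q ≤ (√2 - 1) * u := by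
      nlinarith [mul_le_mul_of_nonneg_left hu2 (mul_nonneg hs0 hu)]
    nlinarith
  · have := sqrt_two_sub_one_le_sub_two_mul hq hq' huq
    nlinarith

/-- The supremum of (a+b+c+d)/(x+y-2a+2d) over the three feasible regimes
is (1+√2)/2. -/
theorem sup_ratio_eq (S : Set ℝ)
    (hS : S = { v : ℝ | ∃ x y a b c d : ℝ,
      0 ≤ x ∧ x ≤ 1 ∧ 0 ≤ y ∧ y ≤ 1 ∧
      a + b + c + d ≤ 1 / 2 ∧
      ((a = x * y ∧ b = x * (1 - y) ∧ c = (1 - x) * y ∧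
          0 ≤ d ∧ d ≤ (1 - x) * (1 - y)) ∨
        (a = x * y ∧ 0 ≤ b ∧ b ≤ x * (1 - y) ∧ 0 ≤ c ∧ c ≤ (1 - x) * y ∧ d = 0) ∨
        (0 ≤ a ∧ a ≤ x * y ∧ b = 0 ∧ c = 0 ∧ d = 0)) ∧
      0 < x + y - 2 * a + 2 * d ∧
      v = (a + b + c + d) / (x + y - 2 * a + 2 * d) }) :
    IsLUB S ((1 + Real.sqrt 2) / 2) := by
  have hs : √2 ^ 2 = 2 := sq_sqrt (by norm_num)
  have hs1 : 1 < √2 := by nlinarith [sqrt_nonneg 2]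
  subst hS
  refine IsGreatest.isLUB ⟨?_, ?_⟩
  · refine ⟨√2 / 2, √2 / 2, 1 / 2, 0, 0, 0, by positivity, by nlinarith, by positivity,
      by nlinarith, by norm_num, Or.inr (Or.inr ⟨by norm_num, by nlinarith, rfl, rfl, rfl⟩),
      by nlinarith, ?_⟩
    rw [eq_div_iff (by nlinarith)]
    nlinarith
  rintro _ ⟨x, y, a, b, c, d, hx0, hx1, hy0, hy1, hsum, hcase, hD, rfl⟩
  rw [div_le_iff₀ hD]
  have hu : 0 ≤ x + y := by positivity
  have hxy := four_mul_le_sq_add x y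
  rcases hcase with ⟨rfl, rfl, rfl, hd0, hd1⟩ | ⟨rfl, hb0, hb1, hc0, hc1, rfl⟩ |
    ⟨ha0, ha1, rfl, rfl, rfl⟩
  · refine (le_one_add_sqrt_two_div_two_mul (q := x * y - d) hu (by linarith) (by nlinarith)
      (le_of_eq (by ring)) hsum).trans_eq ?_
    ring
  · refine (le_one_add_sqrt_two_div_two_mul (q := x * y) hu (by linarith) (by linarith)
      (by linarith) hsum).trans_eq ?_
    ring
  · refine (le_one_add_sqrt_two_div_two_mul (q := a) hu (by linarith) (by linarith)
      (by nlinarith) hsum).trans_eq ?_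
    ring
end

section
/- Let Y be an n×m matrix with entries in {0,1}, and let o denote the total number of ones, with o ≤ nm/2. Define V_R(Y) = Σ_j min(o_j, n − o_j) where o_j is the number of ones in column j, and V_C(Y) = Σ_i min(o_i, m − o_i) where o_i is the number of ones in row i. Then o ≤ ((1+√2)/2)·(V_R(Y) + V_C(Y)). -/
/-!
Call a row heavy if more than half of its entries are ones, likewise for columns, and let `R`
and `C` be the sets of heavy rows and columns and `x` the number of ones in the block `R × C`.
Reading `V = V_R + V_C` off the four blocks cut out by `R` and `C` gives `o ≤ V + x` and
`|R| m + |C| n ≤ V + 2x`. Since `x ≤ |R| |C|` and `2o ≤ nm`, AM-GM yields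
`8 o x ≤ 4 (|R| m) (|C| n) ≤ (V + 2x)²`, and eliminating `x` leaves `2o ≤ (1 + √2) V`.
The argument only uses that the entries lie in `[0, 1]`, so it applies verbatim to real matrices with such entries.
-/

open Finset Matrix

lemma two_mul_le_one_add_sqrt_two_mul {o V x : ℝ} (hx : 0 ≤ x) (hxo : x ≤ o) (hoV : o ≤ V + x)
    (hsq : 8 * o * x ≤ (V + 2 * x) ^ 2) : 2 * o ≤ (1 + √2) * V := by
  have hs : √2 ^ 2 = 2 := Real.sq_sqrt zero_le_two
  have hV : 0 ≤ V := by linarith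
  -- over `x ∈ [o - V, o]` the constraint `hsq` is weakest at `x = o`
  have hsq_o : (2 * √2 * o) ^ 2 ≤ (V + 2 * o) ^ 2 := by
    nlinarith [mul_nonneg (sub_nonneg.2 hxo) (sub_nonneg.2 hoV)]
  have hV2o : 2 * √2 * o ≤ V + 2 * o := (abs_le_of_sq_le_sq' hsq_o (by linarith)).2
  nlinarith [mul_le_mul_of_nonneg_left hV2o (by positivity : (0 : ℝ) ≤ 1 + √2)]

variable {ι κ : Type*}

def blockSum (A : Matrix ι κ ℝ) (s : Finset ι) (t : Finset κ) : ℝ := ∑ i ∈ s, ∑ j ∈ t, A i j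

namespace blockSum

variable (A : Matrix ι κ ℝ) (s : Finset ι) (t : Finset κ)

lemma transpose : blockSum Aᵀ t s = blockSum A s t := sum_comm

lemma compl_add_right [Fintype κ] [DecidableEq κ] :
    blockSum A s tᶜ + blockSum A s t = blockSum A s univ := by
  simp only [blockSum, ← sum_add_distrib, sum_compl_add_sum]

lemma compl_add_left [Fintype ι] [DecidableEq ι] :
    blockSum A sᶜ t + blockSum A s t = blockSum A univ t :=
  sum_compl_add_sum s _

variable {A}

lemma nonneg (h0 : ∀ i j, 0 ≤ A i j) : 0 ≤ blockSum A s t :=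
  sum_nonneg fun i _ => sum_nonneg fun j _ => h0 i j

lemma le_univ_univ [Fintype ι] [Fintype κ] (h0 : ∀ i j, 0 ≤ A i j) :
    blockSum A s t ≤ blockSum A univ univ := by
  calc blockSum A s t ≤ ∑ i ∈ s, ∑ j, A i j :=
        sum_le_sum fun i _ => sum_le_sum_of_subset_of_nonneg (subset_univ t) fun j _ _ => h0 i j
    _ ≤ ∑ i, ∑ j, A i j :=
        sum_le_sum_of_subset_of_nonneg (subset_univ s) fun i _ _ => sum_nonneg fun j _ => h0 i j

lemma le_card_mul_card (h1 : ∀ i j, A i j ≤ 1) : blockSum A s t ≤ #s * #t := by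
  calc blockSum A s t ≤ ∑ _i ∈ s, ∑ _j ∈ t, (1 : ℝ) :=
        sum_le_sum fun i _ => sum_le_sum fun j _ => h1 i j
    _ = #s * #t := by simp

end blockSum

section

variable [Fintype ι] [Fintype κ]

noncomputable def heavyRows (A : Matrix ι κ ℝ) : Finset ι :=
  {i | Fintype.card κ < 2 * ∑ j, A i j}

/-- For a 0-1 matrix, the total `ℓ¹` distance of the rows from their medians (`V_C`). -/
def rowCost (A : Matrix ι κ ℝ) : ℝ := ∑ i, min (∑ j, A i j) (Fintype.card κ - ∑ j, A i j)

lemma rowCost_eq [DecidableEq ι] (A : Matrix ι κ ℝ) :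
    rowCost A = blockSum A (heavyRows A)ᶜ univ
      + (#(heavyRows A) * Fintype.card κ - blockSum A (heavyRows A) univ) := by
  have light : ∀ i ∈ (heavyRows A)ᶜ,
      min (∑ j, A i j) (Fintype.card κ - ∑ j, A i j) = ∑ j, A i j :=
    fun i hi => min_eq_left (by simp [heavyRows] at hi; linarith)
  have heavy : ∀ i ∈ heavyRows A,
      min (∑ j, A i j) (Fintype.card κ - ∑ j, A i j) = Fintype.card κ - ∑ j, A i j :=
    fun i hi => min_eq_right (by simp [heavyRows] at hi; linarith)
  rw [rowCost, ← sum_compl_add_sum (heavyRows A), sum_congr rfl light, sum_congr rfl heavy,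
    sum_sub_distrib, sum_const, nsmul_eq_mul]
  rfl

lemma sum_le_and_card_le_of_blocks (A : Matrix ι κ ℝ) (h0 : ∀ i j, 0 ≤ A i j)
    (h1 : ∀ i j, A i j ≤ 1) :
    let x := blockSum A (heavyRows A) (heavyRows Aᵀ)
    blockSum A univ univ ≤ rowCost Aᵀ + rowCost A + x ∧
      #(heavyRows A) * Fintype.card κ + #(heavyRows Aᵀ) * Fintype.card ι
        ≤ rowCost Aᵀ + rowCost A + 2 * x := by
  classical
  intro x
  set R := heavyRows A
  set C := heavyRows Aᵀ
  have hR := blockSum.le_card_mul_card R univ h1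
  have hC := blockSum.le_card_mul_card univ C h1
  have hw := blockSum.nonneg Rᶜ Cᶜ h0
  have hy := blockSum.nonneg R Cᶜ h0
  simp only [card_univ] at hR hC
  rw [rowCost_eq, rowCost_eq, blockSum.transpose, blockSum.transpose]
  have := blockSum.compl_add_right A R C
  have := blockSum.compl_add_right A Rᶜ C
  have := blockSum.compl_add_left A R C
  have := blockSum.compl_add_left A R Cᶜ
  have := blockSum.compl_add_left A R univ
  constructor <;> linarith

theorem two_mul_sum_le_one_add_sqrt_two_mul_rowCost_add (A : Matrix ι κ ℝ)
    (h0 : ∀ i j, 0 ≤ A i j) (h1 : ∀ i j, A i j ≤ 1)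
    (hhalf : 2 * blockSum A univ univ ≤ Fintype.card ι * Fintype.card κ) :
    2 * blockSum A univ univ ≤ (1 + √2) * (rowCost Aᵀ + rowCost A) := by
  obtain ⟨hoV, hcard⟩ := sum_le_and_card_le_of_blocks A h0 h1
  set x := blockSum A (heavyRows A) (heavyRows Aᵀ)
  have hx0 : 0 ≤ x := blockSum.nonneg _ _ h0
  have hxRC : x ≤ #(heavyRows A) * #(heavyRows Aᵀ) := blockSum.le_card_mul_card _ _ h1
  refine two_mul_le_one_add_sqrt_two_mul hx0 (blockSum.le_univ_univ _ _ h0) hoV ?_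
  calc 8 * blockSum A univ univ * x
      ≤ 4 * (Fintype.card ι * Fintype.card κ) * (#(heavyRows A) * #(heavyRows Aᵀ)) := by
        nlinarith [mul_le_mul hhalf hxRC hx0 (by positivity)]
    _ = 4 * (#(heavyRows A) * Fintype.card κ) * (#(heavyRows Aᵀ) * Fintype.card ι) := by ring
    _ ≤ (#(heavyRows A) * Fintype.card κ + #(heavyRows Aᵀ) * Fintype.card ι) ^ 2 :=
        four_mul_le_sq_add _ _
    _ ≤ (rowCost Aᵀ + rowCost A + 2 * x) ^ 2 := by gcongr

lemma rowCost_ofBool (Y : ι → κ → Bool) :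
    rowCost (fun i j => if Y i j = true then 1 else 0) =
      ((∑ i, min #{j | Y i j = true} (Fintype.card κ - #{j | Y i j = true}) : ℕ) : ℝ) := by
  rw [Nat.cast_sum]
  refine sum_congr rfl fun i _ => ?_
  rw [Nat.cast_min, Nat.cast_sub (card_le_univ _), natCast_card_filter]

end

open Finset in
/-- For a 0-1 matrix with at most half ones, the number of ones is at most
((1+√2)/2)(V_R(Y) + V_C(Y)). -/
theorem ones_le_ratio_row_col (n m : ℕ) (Y : Fin n → Fin m → Bool)
    (o : ℕ)
    (ho : o = (Finset.univ.filter (fun p : Fin n × Fin m => Y p.1 p.2 = true)).card)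
    (hhalf : 2 * o ≤ n * m) :
    (o : ℝ) ≤ (1 + Real.sqrt 2) / 2 *
      (((∑ j : Fin m,
          min ((Finset.univ.filter (fun i : Fin n => Y i j = true)).card)
            (n - (Finset.univ.filter (fun i : Fin n => Y i j = true)).card) : ℕ) : ℝ) +
        ((∑ i : Fin n,
          min ((Finset.univ.filter (fun j : Fin m => Y i j = true)).card)
            (m - (Finset.univ.filter (fun j : Fin m => Y i j = true)).card) : ℕ) : ℝ)) := by
  let A : Matrix (Fin n) (Fin m) ℝ := fun i j => if Y i j = true then 1 else 0
  have hoA : (o : ℝ) = blockSum A univ univ := by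
    rw [ho, natCast_card_filter, Fintype.sum_prod_type]
    rfl
  have hhalfA : 2 * blockSum A univ univ ≤ Fintype.card (Fin n) * Fintype.card (Fin m) := by
    rw [← hoA, Fintype.card_fin, Fintype.card_fin]
    exact_mod_cast hhalf
  have key := two_mul_sum_le_one_add_sqrt_two_mul_rowCost_add A
    (fun i j => by positivity) (fun i j => by dsimp only [A]; split_ifs <;> norm_num) hhalfA
  rw [show Aᵀ = fun j i => if Y i j = true then 1 else 0 from rfl, rowCost_ofBool,
    rowCost_ofBool, ← hoA] at key
  simp only [Fintype.card_fin] at key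
  linarith
end

section
/- Conditional approximation lemma (Lemma 2 of the paper): Let X be an N×M real matrix with a cost function V on submatrices satisfying the refinement subadditivity V_R(Y) ≤ V(Y) and V_C(Y) ≤ V(Y) for every submatrix Y. Let R and C be row and column partitions minimizing L_R = Σ_{R∈R} Σ_j V(X(R,{j})) and L_C = Σ_i Σ_{C∈C} V(X({i},C)) respectively, and let L = Σ_{R∈R} Σ_{C∈C} V(X(R,C)). Suppose α ≥ 0 is such that for every submatrix Y = X(R,C) with R ∈ R, C ∈ C, one has V(Y) ≤ (α/2)(V_R(Y) + V_C(Y)). Then L ≤ α·L*, where L* is the minimum of Σ_{R*∈R*} Σ_{C*∈C*} V(X(R*,C*)) over all pairs of row/column partitions into K_r and K_c parts. -/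
/-!
Split each block cost of the one-way optimal pair `(ρ, γ)` by the hypothesis into half its
row-clustering part and half its column-clustering part. Summed over blocks these are the
one-way objectives `L_R(ρ)` and `L_C(γ)`, which by optimality are at most `L_R(ρs)` and
`L_C(γs)`. Refining the blocks of any pair `(ρs, γs)` into columns, resp. rows, only lowers the
cost, so both are at most `L(ρs, γs)`, giving `L(ρ, γ) ≤ α/2 · 2 L(ρs, γs)`.
-/

open Finset

namespace Biclustering

variable {ι κ K L β : Type*} [Fintype ι] [Fintype κ] [Fintype K] [Fintype L]
  [DecidableEq K] [DecidableEq L]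

abbrev block (ρ : ι → K) (k : K) : Finset ι := univ.filter (fun i => ρ i = k)

section Cost

variable [AddCommMonoid β] (V : Finset ι → Finset κ → β)

/-- The row-clustering objective `L_R`. -/
def rowCost (ρ : ι → K) : β := ∑ k, ∑ j, V (block ρ k) {j}

/-- The column-clustering objective `L_C`. -/
def colCost (γ : κ → L) : β := ∑ i, ∑ l, V {i} (block γ l)

/-- The biclustering objective `L`. -/
def biCost (ρ : ι → K) (γ : κ → L) : β := ∑ k, ∑ l, V (block ρ k) (block γ l)

theorem sum_sum_block_singleton_right (ρ : ι → K) (γ : κ → L) :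
    ∑ k, ∑ l, ∑ j ∈ block γ l, V (block ρ k) {j} = rowCost V ρ :=
  sum_congr rfl fun _ _ => sum_fiberwise _ _ _

theorem sum_sum_block_singleton_left (ρ : ι → K) (γ : κ → L) :
    ∑ k, ∑ l, ∑ i ∈ block ρ k, V {i} (block γ l) = colCost V γ := by
  rw [sum_comm, colCost, sum_comm (s := univ (α := ι))]
  exact sum_congr rfl fun _ _ => sum_fiberwise _ _ _

end Cost

section Refinement

variable [AddCommMonoid β] [PartialOrder β] [IsOrderedAddMonoid β]

theorem sum_singleton_le_sum_block {f : Finset κ → β} (hf : ∀ C, ∑ j ∈ C, f {j} ≤ f C)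
    (γ : κ → L) : ∑ j, f {j} ≤ ∑ l, f (block γ l) :=
  (sum_fiberwise univ γ fun j => f {j}).ge.trans (sum_le_sum fun _ _ => hf _)

variable {V : Finset ι → Finset κ → β}

theorem rowCost_le_biCost (hcol : ∀ R C, ∑ j ∈ C, V R {j} ≤ V R C) (ρ : ι → K) (γ : κ → L) :
    rowCost V ρ ≤ biCost V ρ γ :=
  sum_le_sum fun _ _ => sum_singleton_le_sum_block (hcol _) γ

theorem colCost_le_biCost (hrow : ∀ R C, ∑ i ∈ R, V {i} C ≤ V R C) (ρ : ι → K) (γ : κ → L) :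
    colCost V γ ≤ biCost V ρ γ := by
  rw [colCost, biCost, sum_comm, sum_comm (s := univ (α := K))]
  exact sum_le_sum fun l _ => sum_singleton_le_sum_block (f := fun R => V R (block γ l))
    (fun R => hrow R _) ρ

end Refinement

theorem biCost_le_of_forall_block_le {V : Finset ι → Finset κ → ℝ} {ρ : ι → K} {γ : κ → L}
    {α : ℝ} (hbic : ∀ k l, V (block ρ k) (block γ l) ≤
      α / 2 * (∑ j ∈ block γ l, V (block ρ k) {j} + ∑ i ∈ block ρ k, V {i} (block γ l))) :
    biCost V ρ γ ≤ α / 2 * (rowCost V ρ + colCost V γ) :=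
  calc biCost V ρ γ
      ≤ ∑ k, ∑ l,
          α / 2 * (∑ j ∈ block γ l, V (block ρ k) {j} + ∑ i ∈ block ρ k, V {i} (block γ l)) :=
        sum_le_sum fun k _ => sum_le_sum fun l _ => hbic k l
    _ = α / 2 * (rowCost V ρ + colCost V γ) := by
        simp only [← mul_sum, sum_add_distrib]
        rw [sum_sum_block_singleton_right, sum_sum_block_singleton_left]

end Biclustering

open Biclustering

open Finset in
theorem conditional_approximation_general (N M Kr Kc : ℕ)
    (V : Finset (Fin N) → Finset (Fin M) → ℝ)
    (hcol : ∀ R C, ∑ j ∈ C, V R {j} ≤ V R C)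
    (hrow : ∀ R C, ∑ i ∈ R, V {i} C ≤ V R C)
    (ρ : Fin N → Fin Kr) (γ : Fin M → Fin Kc)
    (hρ : ∀ ρ' : Fin N → Fin Kr,
      ∑ k, ∑ j : Fin M, V (Finset.univ.filter (fun i => ρ i = k)) {j} ≤
        ∑ k, ∑ j : Fin M, V (Finset.univ.filter (fun i => ρ' i = k)) {j})
    (hγ : ∀ γ' : Fin M → Fin Kc,
      ∑ i : Fin N, ∑ l, V {i} (Finset.univ.filter (fun j => γ j = l)) ≤
        ∑ i : Fin N, ∑ l, V {i} (Finset.univ.filter (fun j => γ' j = l)))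
    (α : ℝ) (hα : 0 ≤ α)
    (hbic : ∀ k l,
      V (Finset.univ.filter (fun i => ρ i = k)) (Finset.univ.filter (fun j => γ j = l)) ≤
        α / 2 *
          ((∑ j ∈ Finset.univ.filter (fun j => γ j = l),
              V (Finset.univ.filter (fun i => ρ i = k)) {j}) +
            (∑ i ∈ Finset.univ.filter (fun i => ρ i = k),
              V {i} (Finset.univ.filter (fun j => γ j = l)))))
    (ρs : Fin N → Fin Kr) (γs : Fin M → Fin Kc) :
    ∑ k, ∑ l,
        V (Finset.univ.filter (fun i => ρ i = k)) (Finset.univ.filter (fun j => γ j = l)) ≤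
      α * ∑ k, ∑ l,
        V (Finset.univ.filter (fun i => ρs i = k)) (Finset.univ.filter (fun j => γs j = l)) := by
  have hsum : rowCost V ρ + colCost V γ ≤ biCost V ρs γs + biCost V ρs γs :=
    add_le_add ((hρ ρs).trans (rowCost_le_biCost hcol ρs γs))
      ((hγ γs).trans (colCost_le_biCost hrow ρs γs))
  calc biCost V ρ γ
      ≤ α / 2 * (rowCost V ρ + colCost V γ) := biCost_le_of_forall_block_le hbic
    _ ≤ α / 2 * (biCost V ρs γs + biCost V ρs γs) := by gcongr
    _ = α * biCost V ρs γs := by ring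

open Finset in
/-- Conditional approximation lemma: if every induced bicluster Y of the independent
one-way solution satisfies V(Y) ≤ (α/2)(V_R(Y) + V_C(Y)), then L ≤ α L*. -/
theorem conditional_approximation (N M Kr Kc : ℕ)
    (V : Finset (Fin N) → Finset (Fin M) → ℝ)
    (hV0 : ∀ R C, 0 ≤ V R C)
    (hcol : ∀ R C, ∑ j ∈ C, V R {j} ≤ V R C)
    (hrow : ∀ R C, ∑ i ∈ R, V {i} C ≤ V R C)
    (ρ : Fin N → Fin Kr) (γ : Fin M → Fin Kc)
    (hρ : ∀ ρ' : Fin N → Fin Kr,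
      ∑ k, ∑ j : Fin M, V (Finset.univ.filter (fun i => ρ i = k)) {j} ≤
        ∑ k, ∑ j : Fin M, V (Finset.univ.filter (fun i => ρ' i = k)) {j})
    (hγ : ∀ γ' : Fin M → Fin Kc,
      ∑ i : Fin N, ∑ l, V {i} (Finset.univ.filter (fun j => γ j = l)) ≤
        ∑ i : Fin N, ∑ l, V {i} (Finset.univ.filter (fun j => γ' j = l)))
    (α : ℝ) (hα : 0 ≤ α)
    (hbic : ∀ k l,
      V (Finset.univ.filter (fun i => ρ i = k)) (Finset.univ.filter (fun j => γ j = l)) ≤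
        α / 2 *
          ((∑ j ∈ Finset.univ.filter (fun j => γ j = l),
              V (Finset.univ.filter (fun i => ρ i = k)) {j}) +
            (∑ i ∈ Finset.univ.filter (fun i => ρ i = k),
              V {i} (Finset.univ.filter (fun j => γ j = l)))))
    (ρs : Fin N → Fin Kr) (γs : Fin M → Fin Kc) :
    ∑ k, ∑ l,
        V (Finset.univ.filter (fun i => ρ i = k)) (Finset.univ.filter (fun j => γ j = l)) ≤
      α * ∑ k, ∑ l,
        V (Finset.univ.filter (fun i => ρs i = k)) (Finset.univ.filter (fun j => γs j = l)) :=
  conditional_approximation_general N M Kr Kc V hcol hrow ρ γ hρ hγ α hα hbic ρs γs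
end

section
/- Biclustering with L2 cost admits a 2-approximation by independent one-way clusterings: if R minimizes L_R and C minimizes L_C (as above) under L2 cost, then L = Σ_{R∈R} Σ_{C∈C} V(X(R,C)) ≤ 2·L*, where L* is the optimal biclustering cost. -/
open Finset in
/-- L2 cost of the submatrix of `X` induced by rows `R` and columns `C`:
sum of squared deviations from the submatrix mean. -/
noncomputable def V2 {N M : ℕ} (X : Fin N → Fin M → ℝ)
    (R : Finset (Fin N)) (C : Finset (Fin M)) : ℝ :=
  ∑ i ∈ R, ∑ j ∈ C,
    (X i j - (∑ i' ∈ R, ∑ j' ∈ C, X i' j') / (R.card * C.card)) ^ 2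

/-!
Within a block `R × C` with mean `m`, column means `μ j` and row means `ν i`, write
`x i j - m = (x i j - μ j) + (μ j - m)`. Summing the squares over `i ∈ R` gives the column-wise
cost plus `#R * (μ j - m) ^ 2`, and since `μ j - m` is the mean over `i` of `x i j - ν i`,
Cauchy–Schwarz bounds this last term by the row-wise cost of column `j`. So every block costs at
most its column-wise plus its row-wise cost, whence `L ≤ L_R + L_C`. Optimality of the one-way
clusterings and the fact that the mean is the best constant (so cutting a block into single
columns, or single rows, lowers its cost) give `L_R + L_C ≤ 2 L*`.
-/

open Finset

section SumOfSquares

variable {ι : Type*} (s : Finset ι) (f : ι → ℝ)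

theorem sum_sq_sub_eq_sum_sq_sub_mean_add (c : ℝ) :
    ∑ a ∈ s, (f a - c) ^ 2 =
      ∑ a ∈ s, (f a - (∑ a ∈ s, f a) / #s) ^ 2 + #s * ((∑ a ∈ s, f a) / #s - c) ^ 2 := by
  obtain rfl | hs := s.eq_empty_or_nonempty
  · simp
  have hcard : (#s : ℝ) ≠ 0 := by exact_mod_cast hs.card_pos.ne'
  set μ := (∑ a ∈ s, f a) / #s
  have hsum : ∑ a ∈ s, f a = #s * μ := by rw [mul_div_cancel₀ _ hcard]
  have hexpand : ∀ a ∈ s, (f a - c) ^ 2 = (f a - μ) ^ 2 + 2 * (μ - c) * f a + (c ^ 2 - μ ^ 2) :=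
    fun a _ => by ring
  rw [sum_congr rfl hexpand, sum_add_distrib, sum_add_distrib, ← mul_sum, hsum, sum_const,
    nsmul_eq_mul]
  ring

theorem sum_sq_sub_mean_le (c : ℝ) :
    ∑ a ∈ s, (f a - (∑ a ∈ s, f a) / #s) ^ 2 ≤ ∑ a ∈ s, (f a - c) ^ 2 := by
  rw [sum_sq_sub_eq_sum_sq_sub_mean_add s f c]
  exact le_add_of_nonneg_right (by positivity)

theorem card_mul_sq_mean_le_sum_sq : #s * ((∑ a ∈ s, f a) / #s) ^ 2 ≤ ∑ a ∈ s, f a ^ 2 := by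
  obtain rfl | hs := s.eq_empty_or_nonempty
  · simp
  rw [← le_div_iff₀' (by exact_mod_cast hs.card_pos)]
  exact sum_div_card_sq_le_sum_sq_div_card

end SumOfSquares

section Blocks

variable {N M : ℕ} (X : Fin N → Fin M → ℝ) (R : Finset (Fin N)) (C : Finset (Fin M))

theorem V2_singleton_right (j : Fin M) :
    V2 X R {j} = ∑ i ∈ R, (X i j - (∑ i' ∈ R, X i' j) / #R) ^ 2 := by
  simp [V2]

theorem V2_singleton_left (i : Fin N) :
    V2 X {i} C = ∑ j ∈ C, (X i j - (∑ j' ∈ C, X i j') / #C) ^ 2 := by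
  simp [V2]

theorem sum_V2_singleton_right_le : ∑ j ∈ C, V2 X R {j} ≤ V2 X R C := by
  rw [V2, sum_comm]
  refine sum_le_sum fun j _ => ?_
  rw [V2_singleton_right]
  exact sum_sq_sub_mean_le R (X · j) _

theorem sum_V2_singleton_left_le : ∑ i ∈ R, V2 X {i} C ≤ V2 X R C :=
  sum_le_sum fun i _ => V2_singleton_left X C i ▸ sum_sq_sub_mean_le C (X i) _

theorem V2_le_sum_V2_singleton_right_add_sum_V2_singleton_left :
    V2 X R C ≤ ∑ j ∈ C, V2 X R {j} + ∑ i ∈ R, V2 X {i} C := by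
  set m := (∑ i ∈ R, ∑ j ∈ C, X i j) / (#R * #C)
  set ν : Fin N → ℝ := fun i => (∑ j ∈ C, X i j) / #C
  have hmean : ∀ j, (∑ i ∈ R, X i j) / #R - m = (∑ i ∈ R, (X i j - ν i)) / #R := fun j => by
    rw [sum_sub_distrib, ← sum_div, sub_div, div_div, mul_comm (#C : ℝ)]
  have hcolumn : ∀ j, ∑ i ∈ R, (X i j - m) ^ 2 ≤ V2 X R {j} + ∑ i ∈ R, (X i j - ν i) ^ 2 :=
    fun j => by
      rw [sum_sq_sub_eq_sum_sq_sub_mean_add, V2_singleton_right, hmean]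
      exact add_le_add_right (card_mul_sq_mean_le_sum_sq R _) _
  calc V2 X R C = ∑ j ∈ C, ∑ i ∈ R, (X i j - m) ^ 2 := sum_comm
    _ ≤ ∑ j ∈ C, (V2 X R {j} + ∑ i ∈ R, (X i j - ν i) ^ 2) := sum_le_sum fun j _ => hcolumn j
    _ = ∑ j ∈ C, V2 X R {j} + ∑ i ∈ R, V2 X {i} C := by
      rw [sum_add_distrib, sum_comm (s := C)]
      simp only [V2_singleton_left, ν]

end Blocks

section Clusterings

variable {N M : ℕ} {α β : Type*} [Fintype α] [DecidableEq α] [Fintype β] [DecidableEq β]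
  (X : Fin N → Fin M → ℝ) (ρ : Fin N → α) (γ : Fin M → β)

/-- A clustering is encoded by its labelling map; this is the paper's `L_R`, and the two
definitions below are `L_C` and `L`. -/
noncomputable def rowClusteringCost : ℝ := ∑ k, ∑ j, V2 X {i | ρ i = k} {j}

noncomputable def columnClusteringCost : ℝ := ∑ i, ∑ l, V2 X {i} {j | γ j = l}

noncomputable def biclusteringCost : ℝ := ∑ k, ∑ l, V2 X {i | ρ i = k} {j | γ j = l}

theorem biclusteringCost_le_add :
    biclusteringCost X ρ γ ≤ rowClusteringCost X ρ + columnClusteringCost X γ :=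
  calc biclusteringCost X ρ γ
      ≤ ∑ k, ∑ l, (∑ j ∈ {j | γ j = l}, V2 X {i | ρ i = k} {j} +
          ∑ i ∈ {i | ρ i = k}, V2 X {i} {j | γ j = l}) :=
        sum_le_sum fun k _ => sum_le_sum fun l _ =>
          V2_le_sum_V2_singleton_right_add_sum_V2_singleton_left X _ _
    _ = rowClusteringCost X ρ + columnClusteringCost X γ := by
      simp only [Finset.sum_add_distrib, sum_fiberwise]
      congr 1
      rw [Finset.sum_comm]
      simp only [sum_fiberwise]
      exact Finset.sum_comm

theorem rowClusteringCost_le_biclusteringCost :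
    rowClusteringCost X ρ ≤ biclusteringCost X ρ γ :=
  sum_le_sum fun _ _ => (sum_fiberwise univ γ _).ge.trans <|
    sum_le_sum fun _ _ => sum_V2_singleton_right_le X _ _

theorem columnClusteringCost_le_biclusteringCost :
    columnClusteringCost X γ ≤ biclusteringCost X ρ γ :=
  calc columnClusteringCost X γ = ∑ l, ∑ i, V2 X {i} {j | γ j = l} := sum_comm
    _ ≤ ∑ l, ∑ k, V2 X {i | ρ i = k} {j | γ j = l} :=
      sum_le_sum fun _ _ => (sum_fiberwise univ ρ _).ge.trans <|
        sum_le_sum fun _ _ => sum_V2_singleton_left_le X _ _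
    _ = biclusteringCost X ρ γ := sum_comm

end Clusterings

open Finset in
/-- Biclustering with L2 cost admits a 2-approximation by independent optimal one-way
row and column clusterings. -/
theorem l2_biclustering_two_approx (N M Kr Kc : ℕ) (X : Fin N → Fin M → ℝ)
    (ρ : Fin N → Fin Kr) (γ : Fin M → Fin Kc)
    (hρ : ∀ ρ' : Fin N → Fin Kr,
      ∑ k, ∑ j : Fin M, V2 X (Finset.univ.filter (fun i => ρ i = k)) {j} ≤
        ∑ k, ∑ j : Fin M, V2 X (Finset.univ.filter (fun i => ρ' i = k)) {j})
    (hγ : ∀ γ' : Fin M → Fin Kc,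
      ∑ i : Fin N, ∑ l, V2 X {i} (Finset.univ.filter (fun j => γ j = l)) ≤
        ∑ i : Fin N, ∑ l, V2 X {i} (Finset.univ.filter (fun j => γ' j = l)))
    (ρs : Fin N → Fin Kr) (γs : Fin M → Fin Kc) :
    ∑ k, ∑ l,
        V2 X (Finset.univ.filter (fun i => ρ i = k)) (Finset.univ.filter (fun j => γ j = l)) ≤
      2 * ∑ k, ∑ l,
        V2 X (Finset.univ.filter (fun i => ρs i = k))
          (Finset.univ.filter (fun j => γs j = l)) := by
  calc biclusteringCost X ρ γ
      ≤ rowClusteringCost X ρ + columnClusteringCost X γ := biclusteringCost_le_add X ρ γ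
    _ ≤ rowClusteringCost X ρs + columnClusteringCost X γs := add_le_add (hρ ρs) (hγ γs)
    _ ≤ biclusteringCost X ρs γs + biclusteringCost X ρs γs :=
      add_le_add (rowClusteringCost_le_biclusteringCost X ρs γs)
        (columnClusteringCost_le_biclusteringCost X ρs γs)
    _ = 2 * biclusteringCost X ρs γs := (two_mul _).symm
end

section
/- For the binary case with the paper's block parametrization: setting V(Y) = o(A)+o(B)+o(C)+o(D) (number of ones, assumed ≤ nm/2), V_R(Y) = nm' − o(A) + o(B) − o(C) + o(D), V_C(Y) = n'm − o(A) − o(B) + o(C) + o(D), with normalized variables x = n'/n ∈ [0,1], y = m'/m ∈ [0,1], a = o(A)/(nm), b = o(B)/(nm), c = o(C)/(nm), d = o(D)/(nm) subject to a ≤ xy, b ≤ x(1−y), c ≤ (1−x)y, d ≤ (1−x)(1−y), a+b+c+d ≤ 1/2, and x + y − 2a + 2d > 0, the inequality 2(a+b+c+d) ≤ (1+√2)(x+y−2a+2d) holds. -/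
/-! With `s = x + y` and `p = x y`, the constraints give `a ≤ p`, `b + c ≤ s - 2p` and
`4p ≤ s²`. If `s ≤ 2 - √2`, these bounds alone show the ratio is at most `1 + √2`. Otherwise
the numerator is at most `1` and the denominator is at least `√2 - 1 = 1 / (1 + √2)`: for
`s ≤ √2` because `s - s²/2 ≥ √2 - 1` on `[2 - √2, √2]`, and for `s > √2` because `2a ≤ 1`. -/

open Real

theorem two_mul_sqrt_two_mul_le {s p : ℝ} (hs0 : 0 ≤ s) (hs : s ≤ 2 - √2)
    (hp : 4 * p ≤ s ^ 2) : 2 * √2 * p ≤ (√2 - 1) * s := by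
  have h2 : √2 * √2 = 2 := mul_self_sqrt zero_le_two
  nlinarith [mul_le_mul_of_nonneg_left hp (sqrt_nonneg 2),
    mul_nonneg (mul_nonneg (sqrt_nonneg 2) hs0) (sub_nonneg.2 hs)]

theorem sqrt_two_sub_one_le_sub_two_mul_s19 {s p : ℝ} (hs₁ : 2 - √2 ≤ s) (hs₂ : s ≤ √2)
    (hp : 4 * p ≤ s ^ 2) : √2 - 1 ≤ s - 2 * p := by
  have h2 : √2 * √2 = 2 := mul_self_sqrt zero_le_two
  nlinarith [mul_nonneg (sub_nonneg.2 hs₂) (sub_nonneg.2 hs₁)]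

theorem one_le_one_add_sqrt_two_mul {t : ℝ} (ht : √2 - 1 ≤ t) : 1 ≤ (1 + √2) * t := by
  have h2 : √2 * √2 = 2 := mul_self_sqrt zero_le_two
  nlinarith [mul_le_mul_of_nonneg_left ht (by positivity : (0 : ℝ) ≤ 1 + √2)]

theorem key_inequality_general (x y a b c d : ℝ)
    (hx0 : 0 ≤ x) (hy0 : 0 ≤ y)
    (hb0 : 0 ≤ b) (hc0 : 0 ≤ c) (hd0 : 0 ≤ d)
    (ha : a ≤ x * y) (hb : b ≤ x * (1 - y)) (hc : c ≤ (1 - x) * y)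
    (hsum : a + b + c + d ≤ 1 / 2) :
    2 * (a + b + c + d) ≤ (1 + Real.sqrt 2) * (x + y - 2 * a + 2 * d) := by
  have hp : 4 * (x * y) ≤ (x + y) ^ 2 := by
    simpa only [mul_assoc] using four_mul_le_sq_add x y
  have hbc : b + c ≤ x + y - 2 * (x * y) := by linear_combination hb + hc
  rcases le_or_gt (x + y) (2 - √2) with hsmall | hlarge
  · have hp' := two_mul_sqrt_two_mul_le (add_nonneg hx0 hy0) hsmall hp
    nlinarith [mul_le_mul_of_nonneg_left ha (by positivity : (0 : ℝ) ≤ 2 + √2),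
      mul_nonneg (sqrt_nonneg 2) hd0]
  · suffices hden : √2 - 1 ≤ x + y - 2 * a + 2 * d by
      linarith [one_le_one_add_sqrt_two_mul hden]
    rcases le_or_gt (x + y) √2 with hmid | hbig
    · linarith [sqrt_two_sub_one_le_sub_two_mul_s19 hlarge.le hmid hp]
    · linarith

/-- The key inequality establishing the 1+√2 ratio on the relaxed feasible region:
2(a+b+c+d) ≤ (1+√2)(x+y-2a+2d). -/
theorem key_inequality (x y a b c d : ℝ)
    (hx0 : 0 ≤ x) (hx1 : x ≤ 1) (hy0 : 0 ≤ y) (hy1 : y ≤ 1)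
    (ha0 : 0 ≤ a) (hb0 : 0 ≤ b) (hc0 : 0 ≤ c) (hd0 : 0 ≤ d)
    (ha : a ≤ x * y) (hb : b ≤ x * (1 - y)) (hc : c ≤ (1 - x) * y)
    (hd : d ≤ (1 - x) * (1 - y))
    (hsum : a + b + c + d ≤ 1 / 2)
    (hden : 0 < x + y - 2 * a + 2 * d) :
    2 * (a + b + c + d) ≤ (1 + Real.sqrt 2) * (x + y - 2 * a + 2 * d) :=
  key_inequality_general x y a b c d hx0 hy0 hb0 hc0 hd0 ha hb hc hsum
end
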